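/- Let H be an n×m matrix, D a positive diagonal n×n matrix, P an n×n permutation matrix, Q an m×m permutation matrix, X an n×d feature matrix, and Θ a d×d' matrix. Define Y = Σ_{k=0}^{K} γ_k Ã^k X Θ with Ã = (1/(p+1)) D^{-1/2} H Hᵀ D^{-1/2}, and Y' the same expression computed from H' = PHQᵀ, D' = PDPᵀ, X' = PX. Then Y' = PY. -/

import Mathlib

/-!
Multiplying by permutation matrices only relabels indices: `P * M * Qᵀ` is `M` with rows
reindexed by `σ` and columns by `τ`. Every operation in the layer (diagonal scaling, products,
transposes, powers, linear combinations) commutes with such relabelling, the hyperedge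
relabelling `τ` cancels in `H' * H'ᵀ`, and so the relabelled layer output is the original one
with its rows relabelled by `σ`, i.e. `P * Y`.
-/

open Matrix

namespace Matrix

variable {m n o α : Type*} [Fintype n] [DecidableEq n]

section NonAssocSemiring

variable [NonAssocSemiring α]

theorem permMatrix_mul_eq_submatrix (σ : Equiv.Perm n) (M : Matrix n m α) :
    σ.permMatrix α * M = M.submatrix σ id :=
  PEquiv.toMatrix_toPEquiv_mul σ M

theorem mul_transpose_permMatrix_eq_submatrix [DecidableEq m] (M : Matrix m n α)
    (τ : Equiv.Perm n) : M * (τ.permMatrix α)ᵀ = M.submatrix id τ := by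
  rw [transpose_permMatrix, PEquiv.mul_toMatrix_toPEquiv]
  rfl

theorem permMatrix_mul_mul_transpose_permMatrix [Fintype m] [DecidableEq m]
    (σ : Equiv.Perm n) (τ : Equiv.Perm m) (M : Matrix n m α) :
    σ.permMatrix α * M * (τ.permMatrix α)ᵀ = M.submatrix σ τ := by
  rw [permMatrix_mul_eq_submatrix, mul_transpose_permMatrix_eq_submatrix, submatrix_submatrix]
  rfl

end NonAssocSemiring

theorem submatrix_equiv_pow [Semiring α] (A : Matrix n n α) (σ : n ≃ n) (k : ℕ) :
    A.submatrix σ σ ^ k = (A ^ k).submatrix σ σ := by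
  induction k with
  | zero => simp
  | succ k ih => rw [pow_succ, ih, submatrix_mul_equiv, pow_succ]

theorem sum_smul_pow_submatrix_mul [Fintype m] [CommSemiring α] (s : Finset ℕ) (c : ℕ → α)
    (A : Matrix n n α) (X : Matrix n m α) (Θ : Matrix m o α) (σ : Equiv.Perm n) :
    ∑ k ∈ s, c k • (A.submatrix σ σ ^ k * X.submatrix σ id * Θ) =
      σ.permMatrix α * ∑ k ∈ s, c k • (A ^ k * X * Θ) := by
  rw [Matrix.mul_sum]
  refine Finset.sum_congr rfl fun k _ => ?_
  rw [submatrix_equiv_pow, submatrix_mul_equiv, ← permMatrix_mul_eq_submatrix, Matrix.mul_smul,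
    Matrix.mul_assoc]

end Matrix

theorem higcn_layer_perm_equivariant_general (n m p d' e K : ℕ)
    (H : Matrix (Fin n) (Fin m) ℝ) (dg : Fin n → ℝ)
    (σ : Equiv.Perm (Fin n)) (τ : Equiv.Perm (Fin m))
    (X : Matrix (Fin n) (Fin d') ℝ) (Θ : Matrix (Fin d') (Fin e) ℝ)
    (γ : ℕ → ℝ) :
    let D : Matrix (Fin n) (Fin n) ℝ := Matrix.diagonal dg
    let Dhi : Matrix (Fin n) (Fin n) ℝ :=
      Matrix.diagonal fun i => (Real.sqrt (dg i))⁻¹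
    let A : Matrix (Fin n) (Fin n) ℝ := ((p : ℝ) + 1)⁻¹ • (Dhi * H * Hᵀ * Dhi)
    let P : Matrix (Fin n) (Fin n) ℝ := σ.permMatrix ℝ
    let Q : Matrix (Fin m) (Fin m) ℝ := τ.permMatrix ℝ
    let H' : Matrix (Fin n) (Fin m) ℝ := P * H * Qᵀ
    let D' : Matrix (Fin n) (Fin n) ℝ := P * D * Pᵀ
    let Dhi' : Matrix (Fin n) (Fin n) ℝ :=
      Matrix.diagonal fun i => (Real.sqrt (D' i i))⁻¹
    let A' : Matrix (Fin n) (Fin n) ℝ :=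
      ((p : ℝ) + 1)⁻¹ • (Dhi' * H' * H'ᵀ * Dhi')
    let X' : Matrix (Fin n) (Fin d') ℝ := P * X
    let Y : Matrix (Fin n) (Fin e) ℝ :=
      ∑ k ∈ Finset.range (K + 1), γ k • (A ^ k * X * Θ)
    let Y' : Matrix (Fin n) (Fin e) ℝ :=
      ∑ k ∈ Finset.range (K + 1), γ k • (A' ^ k * X' * Θ)
    Y' = P * Y := by
  intro D Dhi A P Q H' D' Dhi' A' X' Y Y'
  have hH' : H' = H.submatrix σ τ := permMatrix_mul_mul_transpose_permMatrix σ τ H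
  have hD' : D' = diagonal (dg ∘ σ) := by
    rw [← submatrix_diagonal_equiv]
    exact permMatrix_mul_mul_transpose_permMatrix σ σ D
  have hDhi' : Dhi' = Dhi.submatrix σ σ := by
    simp only [Dhi', Dhi, hD', diagonal_apply_eq, submatrix_diagonal_equiv]
    rfl
  have hA' : A' = A.submatrix σ σ := by
    simp only [A', A, hDhi', hH', transpose_submatrix, submatrix_mul_equiv]
    rfl
  have hX' : X' = X.submatrix σ id := permMatrix_mul_eq_submatrix σ X
  simp only [Y', Y, hA', hX']
  exact sum_smul_pow_submatrix_mul _ γ A X Θ σ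

/-- Node-permutation equivariance of the HiGCN convolution layer:
Y' = P Y where Y = Σ_k γ_k Ã^k X Θ. -/
theorem higcn_layer_perm_equivariant (n m p d' e K : ℕ)
    (H : Matrix (Fin n) (Fin m) ℝ) (dg : Fin n → ℝ) (hd : ∀ i, 0 < dg i)
    (σ : Equiv.Perm (Fin n)) (τ : Equiv.Perm (Fin m))
    (X : Matrix (Fin n) (Fin d') ℝ) (Θ : Matrix (Fin d') (Fin e) ℝ)
    (γ : ℕ → ℝ) :
    let D : Matrix (Fin n) (Fin n) ℝ := Matrix.diagonal dg
    let Dhi : Matrix (Fin n) (Fin n) ℝ :=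
      Matrix.diagonal fun i => (Real.sqrt (dg i))⁻¹
    let A : Matrix (Fin n) (Fin n) ℝ := ((p : ℝ) + 1)⁻¹ • (Dhi * H * Hᵀ * Dhi)
    let P : Matrix (Fin n) (Fin n) ℝ := σ.permMatrix ℝ
    let Q : Matrix (Fin m) (Fin m) ℝ := τ.permMatrix ℝ
    let H' : Matrix (Fin n) (Fin m) ℝ := P * H * Qᵀ
    let D' : Matrix (Fin n) (Fin n) ℝ := P * D * Pᵀ
    let Dhi' : Matrix (Fin n) (Fin n) ℝ :=
      Matrix.diagonal fun i => (Real.sqrt (D' i i))⁻¹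
    let A' : Matrix (Fin n) (Fin n) ℝ :=
      ((p : ℝ) + 1)⁻¹ • (Dhi' * H' * H'ᵀ * Dhi')
    let X' : Matrix (Fin n) (Fin d') ℝ := P * X
    let Y : Matrix (Fin n) (Fin e) ℝ :=
      ∑ k ∈ Finset.range (K + 1), γ k • (A ^ k * X * Θ)
    let Y' : Matrix (Fin n) (Fin e) ℝ :=
      ∑ k ∈ Finset.range (K + 1), γ k • (A' ^ k * X' * Θ)
    Y' = P * Y :=
  higcn_layer_perm_equivariant_general n m p d' e K H dg σ τ X Θ γ
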